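/- Let θ be a standard mollifier on ℝ^n and J_ε convolution with θ_ε. For any A ∈ C^1_b(ℝ^n), p ∈ [1,∞), and j ∈ {1,…,n}, there is a constant C = C(n,p,θ) such that for all v ∈ C_c^∞(ℝ^n): ‖[A, J_ε] ∂_j v‖_{L^p} ≤ C · ‖A‖_{C¹} · ‖v‖_{L^p}, uniformly in ε > 0. -/

import Mathlib

open MeasureTheory ENNReal Set
open scoped Convolution

set_option maxHeartbeats 1000000

noncomputable section

abbrev Rn (n : ℕ) := EuclideanSpace ℝ (Fin n)

/-- Mollification `J_ε f = f ⋆ θ_ε` with `θ_ε(x) = ε^{-n} θ(x/ε)`. -/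
def mollify {n : ℕ} (θ : Rn n → ℝ) (ε : ℝ) (f : Rn n → ℝ) : Rn n → ℝ :=
  fun x => ∫ y, ((ε ^ n)⁻¹ * θ (ε⁻¹ • y)) * f (x - y)

/-- The `C¹`-norm `‖A‖_∞ + ‖∇A‖_∞` (valued in `ℝ≥0∞`). -/
def c1Norm {n : ℕ} (A : Rn n → ℝ) : ℝ≥0∞ :=
  (⨆ x, (‖A x‖₊ : ℝ≥0∞)) + ⨆ x, (‖fderiv ℝ A x‖₊ : ℝ≥0∞)

/-- The partial derivative `∂_j v`. -/
def partialDeriv {n : ℕ} (j : Fin n) (v : Rn n → ℝ) : Rn n → ℝ :=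
  fun x => fderiv ℝ v x (EuclideanSpace.single j (1 : ℝ))

/-- Swap the derivative from one factor of a convolution to the other. -/
lemma conv_swap_deriv {n : ℕ} (φ w : Rn n → ℝ) (hφs : ContDiff ℝ (⊤ : ℕ∞) φ)
    (hφc : HasCompactSupport φ) (hw : ContDiff ℝ 1 w) (hwc : HasCompactSupport w)
    (u : Rn n) (x : Rn n) :
    ∫ y, φ y * fderiv ℝ w (x - y) u = ∫ y, fderiv ℝ φ y u * w (x - y) := by
  set L : ℝ →L[ℝ] ℝ →L[ℝ] ℝ := ContinuousLinearMap.mul ℝ ℝ with hL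
  have hφL : LocallyIntegrable φ volume := hφs.continuous.locallyIntegrable
  have hwL : LocallyIntegrable w volume := hw.continuous.locallyIntegrable
  have h1 := hwc.hasFDerivAt_convolution_right L hφL hw x
  have h2 := hφc.hasFDerivAt_convolution_left L (hφs.of_le (by simp)) hwL x
  have heq : (φ ⋆[L.precompR (Rn n), volume] fderiv ℝ w) x
      = (fderiv ℝ φ ⋆[L.precompL (Rn n), volume] w) x := h1.unique h2
  have hl : (∫ y, φ y * fderiv ℝ w (x - y) u)
      = ((φ ⋆[L.precompR (Rn n), volume] fderiv ℝ w) x) u := by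
    rw [convolution_precompR_apply L hφL (hwc.fderiv ℝ) (hw.continuous_fderiv one_ne_zero) x u]
    simp [convolution_def, hL]
  have hint : Integrable (fun t => (L.precompL (Rn n)) (fderiv ℝ φ t) (w (x - t))) volume :=
    (hφc.fderiv ℝ).convolutionExists_left (L.precompL (Rn n))
      ((hφs.continuous_fderiv (by simp))) hwL x
  have hr : ((fderiv ℝ φ ⋆[L.precompL (Rn n), volume] w) x) u
      = ∫ y, fderiv ℝ φ y u * w (x - y) := by
    rw [convolution_def, ContinuousLinearMap.integral_apply hint]
    simp [hL]
  rw [hl, heq, hr]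

lemma lintegral_translate {n : ℕ} (f : Rn n → ℝ≥0∞) (hf : Measurable f) (y : Rn n) :
    ∫⁻ x, f (x - y) = ∫⁻ x, f x := by
  calc ∫⁻ x, f (x - y) = ∫⁻ x, f x ∂(Measure.map (· + (-y)) (volume : Measure (Rn n))) := by
        rw [lintegral_map hf (measurable_add_const _)]; simp [sub_eq_add_neg]
    _ = ∫⁻ x, f x := by rw [map_add_right_eq_self]

/-- Young's inequality for the pair `(1, p, p)` in `ℝ≥0∞` form. -/
lemma young_conv {n : ℕ} (k f : Rn n → ℝ≥0∞) (hk : Measurable k) (hf : Measurable f)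
    (pr : ℝ) (hpr : 1 ≤ pr) :
    (∫⁻ x, (∫⁻ y, k y * f (x - y)) ^ pr) ^ (1/pr)
      ≤ (∫⁻ y, k y) * (∫⁻ x, f x ^ pr) ^ (1/pr) := by
  have hpr0 : (0:ℝ) < pr := lt_of_lt_of_le one_pos hpr
  have hmeas2 : ∀ y : Rn n, Measurable fun x : Rn n => f (x - y) :=
    fun y => hf.comp (measurable_sub_const y)
  have hmeas3 : ∀ x : Rn n, Measurable fun y : Rn n => f (x - y) :=
    fun x => hf.comp (measurable_const.sub measurable_id)
  have hmeasP : Measurable fun z : Rn n × Rn n => k z.2 * f (z.1 - z.2) ^ pr :=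
    (hk.comp measurable_snd).mul ((hf.comp (measurable_fst.sub measurable_snd)).pow_const pr)
  have htransl : ∀ y : Rn n, ∫⁻ x, f (x - y) ^ pr = ∫⁻ x, f x ^ pr := by
    intro y
    exact lintegral_translate (fun z => f z ^ pr) (hf.pow_const pr) y
  have hswap : ∫⁻ x, ∫⁻ y, k y * f (x - y) ^ pr = (∫⁻ y, k y) * ∫⁻ x, f x ^ pr := by
    rw [lintegral_lintegral_swap hmeasP.aemeasurable]
    have h1 : ∀ y : Rn n, ∫⁻ x, k y * f (x - y) ^ pr = k y * ∫⁻ x, f x ^ pr := by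
      intro y
      rw [lintegral_const_mul _ ((hmeas2 y).pow_const pr), htransl]
    simp_rw [h1]
    rw [lintegral_mul_const _ hk]
  by_cases hK0 : (∫⁻ y, k y : ℝ≥0∞) = 0
  · have hk0 : k =ᵐ[volume] 0 := (lintegral_eq_zero_iff hk).1 hK0
    have hinner : ∀ x : Rn n, (∫⁻ y, k y * f (x - y)) = 0 := by
      intro x
      refine (lintegral_eq_zero_iff (hk.mul (hmeas3 x))).2 ?_
      filter_upwards [hk0] with y hy
      simp [hy]
    simp_rw [hinner]
    rw [ENNReal.zero_rpow_of_pos hpr0, lintegral_zero, ENNReal.zero_rpow_of_pos (by positivity)]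
    exact zero_le
  rcases eq_or_lt_of_le hpr with hpr1 | hpr1
  · subst hpr1
    simp only [ENNReal.rpow_one, one_div_one] at hswap ⊢
    rw [hswap]
  have hpq : pr.HolderConjugate (Real.conjExponent pr) := Real.HolderConjugate.conjExponent hpr1
  set q := Real.conjExponent pr with hqdef
  have hqpos : (0:ℝ) < q := hpq.symm.pos
  have hq0 : q ≠ 0 := ne_of_gt hqpos
  have hsum : 1/q + 1/pr = 1 := by
    rw [add_comm]; simpa [one_div] using hpq.inv_add_inv_eq_one
  have key : ∀ x : Rn n, (∫⁻ y, k y * f (x - y))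
      ≤ (∫⁻ y, k y) ^ (1/q) * (∫⁻ y, k y * f (x - y) ^ pr) ^ (1/pr) := by
    intro x
    have h1 : (fun y => k y * f (x - y))
        = (fun y => k y ^ (1/q)) * (fun y => k y ^ (1/pr) * f (x - y)) := by
      funext y
      simp only [Pi.mul_apply, one_div]
      rw [← mul_assoc, ← ENNReal.rpow_add_of_nonneg _ _ (le_of_lt (by positivity))
        (le_of_lt (by positivity)), show q⁻¹ + pr⁻¹ = 1 by
          rw [add_comm]; exact hpq.inv_add_inv_eq_one, ENNReal.rpow_one]
    have h2 := ENNReal.lintegral_mul_le_Lp_mul_Lq (volume : Measure (Rn n)) hpq.symm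
      (f := fun y => k y ^ (1/q)) (g := fun y => k y ^ (1/pr) * f (x - y))
      ((hk.pow_const (1/q)).aemeasurable)
      (((hk.pow_const (1/pr)).mul (hmeas3 x)).aemeasurable)
    rw [← h1] at h2
    have e1 : ∫⁻ y, ((fun y => k y ^ (1/q)) y) ^ q = ∫⁻ y, k y := by
      refine lintegral_congr fun y => ?_
      rw [one_div, ENNReal.rpow_inv_rpow hq0]
    have e2 : ∫⁻ y, ((fun y => k y ^ (1/pr) * f (x - y)) y) ^ pr
        = ∫⁻ y, k y * f (x - y) ^ pr := by
      refine lintegral_congr fun y => ?_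
      rw [ENNReal.mul_rpow_of_nonneg _ _ (le_of_lt hpr0), one_div,
        ENNReal.rpow_inv_rpow (ne_of_gt hpr0)]
    rw [e1, e2] at h2
    exact h2
  have step : ∫⁻ x, (∫⁻ y, k y * f (x - y)) ^ pr
      ≤ (∫⁻ y, k y) ^ (pr/q) * ((∫⁻ y, k y) * ∫⁻ x, f x ^ pr) := by
    have hpt : ∀ x : Rn n, (∫⁻ y, k y * f (x - y)) ^ pr
        ≤ (∫⁻ y, k y) ^ (pr/q) * ∫⁻ y, k y * f (x - y) ^ pr := by
      intro x
      have h3 := ENNReal.rpow_le_rpow (key x) (le_of_lt hpr0)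
      rw [ENNReal.mul_rpow_of_nonneg _ _ (le_of_lt hpr0), ← ENNReal.rpow_mul,
        ← ENNReal.rpow_mul, one_div, one_div, inv_mul_cancel₀ (ne_of_gt hpr0),
        ENNReal.rpow_one] at h3
      have : q⁻¹ * pr = pr / q := by field_simp
      rwa [this] at h3
    have hImeas : Measurable fun x : Rn n => ∫⁻ y, k y * f (x - y) ^ pr :=
      hmeasP.lintegral_prod_right'
    calc ∫⁻ x, (∫⁻ y, k y * f (x - y)) ^ pr
        ≤ ∫⁻ x, (∫⁻ y, k y) ^ (pr/q) * ∫⁻ y, k y * f (x - y) ^ pr := lintegral_mono hpt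
      _ = (∫⁻ y, k y) ^ (pr/q) * ∫⁻ x, ∫⁻ y, k y * f (x - y) ^ pr :=
          lintegral_const_mul _ hImeas
      _ = (∫⁻ y, k y) ^ (pr/q) * ((∫⁻ y, k y) * ∫⁻ x, f x ^ pr) := by rw [hswap]
  calc (∫⁻ x, (∫⁻ y, k y * f (x - y)) ^ pr) ^ (1/pr)
      ≤ ((∫⁻ y, k y) ^ (pr/q) * ((∫⁻ y, k y) * ∫⁻ x, f x ^ pr)) ^ (1/pr) :=
        ENNReal.rpow_le_rpow step (by positivity)
    _ = (∫⁻ y, k y) ^ (1/q) * ((∫⁻ y, k y) ^ (1/pr) * (∫⁻ x, f x ^ pr) ^ (1/pr)) := by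
        rw [ENNReal.mul_rpow_of_nonneg _ _ (by positivity),
          ENNReal.mul_rpow_of_nonneg _ _ (by positivity), ← ENNReal.rpow_mul]
        congr 2
        field_simp
    _ = (∫⁻ y, k y) * (∫⁻ x, f x ^ pr) ^ (1/pr) := by
        rw [← mul_assoc, ← ENNReal.rpow_add_of_nonneg _ _ (le_of_lt (by positivity))
          (le_of_lt (by positivity)), hsum, ENNReal.rpow_one]

/-- Scaling of lower integrals under dilation on `ℝⁿ`. -/
lemma lintegral_comp_inv_smul {n : ℕ} (g : Rn n → ℝ≥0∞) (hg : Measurable g)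
    {ε : ℝ} (hε : 0 < ε) :
    ∫⁻ y, g (ε⁻¹ • y) = ENNReal.ofReal (ε ^ n) * ∫⁻ z, g z := by
  have hne : (ε⁻¹ : ℝ) ≠ 0 := inv_ne_zero (ne_of_gt hε)
  have hmap := Measure.map_addHaar_smul (μ := (volume : Measure (Rn n))) hne
  have h1 : ∫⁻ y, g (ε⁻¹ • y)
      = ∫⁻ z, g z ∂(Measure.map (fun y : Rn n => ε⁻¹ • y) volume) :=
    (lintegral_map hg (measurable_const_smul _)).symm
  rw [h1, hmap, lintegral_smul_measure]
  congr 1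
  rw [finrank_euclideanSpace_fin, inv_pow, inv_inv, abs_of_pos (pow_pos hε n)]

/-- For a standard mollifier `θ`, any `p ∈ [1,∞)` and any coordinate
direction `j`, there is a constant `C = C(n,p,θ)` such that for every `A ∈ C¹_b(ℝⁿ)`,
every `ε > 0` and every `v ∈ C_c^∞(ℝⁿ)`,
`‖[A, J_ε] ∂_j v‖_{L^p} ≤ C ‖A‖_{C¹} ‖v‖_{L^p}`, uniformly in `ε`. -/
theorem commutator_mollifier_derivative_Lp (n : ℕ) (hn : 0 < n) (θ : Rn n → ℝ)
    (hθ_smooth : ContDiff ℝ (⊤ : ℕ∞) θ)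
    (hθ_supp : ∀ x : Rn n, 1 < ‖x‖ → θ x = 0)
    (hθ_nonneg : ∀ x, 0 ≤ θ x)
    (hθ_int : ∫ x, θ x = 1)
    (p : ℝ≥0∞) (hp1 : 1 ≤ p) (hp : p ≠ ⊤) (j : Fin n) :
    ∃ C : ℝ≥0∞, 0 < C ∧ C < ⊤ ∧
      ∀ A : Rn n → ℝ, ContDiff ℝ 1 A →
        (∃ M : ℝ, ∀ x, |A x| + ‖fderiv ℝ A x‖ ≤ M) →
        ∀ ε : ℝ, 0 < ε →
        ∀ v : Rn n → ℝ, ContDiff ℝ (⊤ : ℕ∞) v → HasCompactSupport v →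
          eLpNorm
              (fun x => A x * mollify θ ε (partialDeriv j v) x
                - mollify θ ε (fun y => A y * partialDeriv j v y) x)
              p volume
            ≤ C * c1Norm A * eLpNorm v p volume := by
  classical
  set e : Rn n := EuclideanSpace.single j (1 : ℝ) with he_def
  have he : ‖e‖ = 1 := by simp [he_def, EuclideanSpace.norm_single]
  -- facts about θ
  have hθc : HasCompactSupport θ := by
    apply HasCompactSupport.intro (isCompact_closedBall (0 : Rn n) 1)
    intro x hx
    exact hθ_supp x (by simpa [dist_zero_right] using hx)
  have hθcont : Continuous θ := hθ_smooth.continuous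
  have hθd : Continuous fun z : Rn n => fderiv ℝ θ z := hθ_smooth.continuous_fderiv (by simp)
  have hθdj : Continuous fun z : Rn n => fderiv ℝ θ z e :=
    (ContinuousLinearMap.apply ℝ ℝ e).continuous.comp hθd
  have hθdjc : HasCompactSupport fun z : Rn n => fderiv ℝ θ z e :=
    (hθc.fderiv ℝ).comp_left (g := fun T : Rn n →L[ℝ] ℝ => T e) rfl
  -- the vanishing of `fderiv θ` outside the unit ball
  have hθd0 : ∀ z : Rn n, 1 < ‖z‖ → fderiv ℝ θ z = 0 := by
    intro z hz
    have hopen : IsOpen {w : Rn n | 1 < ‖w‖} := isOpen_lt continuous_const continuous_norm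
    have hev : θ =ᶠ[nhds z] (fun _ => (0:ℝ)) := by
      filter_upwards [hopen.mem_nhds hz] with w hw
      exact hθ_supp w hw
    rw [hev.fderiv_eq, fderiv_fun_const]
    rfl
  -- the constant
  set H : Rn n → ℝ≥0∞ := fun z => (‖fderiv ℝ θ z e‖₊ : ℝ≥0∞) + (‖θ z‖₊ : ℝ≥0∞) with hH_def
  set C : ℝ≥0∞ := ∫⁻ z, H z with hC_def
  have hHmeas : Measurable H := by
    exact ((hθdj.measurable.nnnorm.coe_nnreal_ennreal).add
      (hθcont.measurable.nnnorm.coe_nnreal_ennreal))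
  have hCtop : C < ⊤ := by
    have hsplit : C = (∫⁻ z, (‖fderiv ℝ θ z e‖₊ : ℝ≥0∞)) + ∫⁻ z, (‖θ z‖₊ : ℝ≥0∞) := by
      rw [hC_def, hH_def]
      exact lintegral_add_left (μ := volume) (hθdj.measurable.nnnorm.coe_nnreal_ennreal) _
    have h1 : (∫⁻ z, (‖fderiv ℝ θ z e‖₊ : ℝ≥0∞)) < ⊤ :=
      (hθdj.integrable_of_hasCompactSupport hθdjc).2
    have h2 : (∫⁻ z, (‖θ z‖₊ : ℝ≥0∞)) < ⊤ :=
      (hθcont.integrable_of_hasCompactSupport hθc).2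
    rw [hsplit]
    exact ENNReal.add_lt_top.2 ⟨h1, h2⟩
  have hC1 : 1 ≤ C := by
    have hθint : Integrable θ volume := hθcont.integrable_of_hasCompactSupport hθc
    have h0 : (1:ℝ≥0∞) = ENNReal.ofReal (∫ x, θ x) := by rw [hθ_int]; simp
    rw [h0, ofReal_integral_eq_lintegral_ofReal hθint (Filter.Eventually.of_forall hθ_nonneg)]
    refine lintegral_mono fun z => ?_
    calc ENNReal.ofReal (θ z) ≤ (‖θ z‖₊ : ℝ≥0∞) := by
          rw [← enorm_eq_nnnorm, Real.enorm_eq_ofReal_abs]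
          exact ENNReal.ofReal_le_ofReal (le_abs_self _)
      _ ≤ H z := by rw [hH_def]; exact le_add_self
  refine ⟨C, zero_lt_one.trans_le hC1, hCtop, ?_⟩
  intro A hA hM ε hε v hv hvc
  obtain ⟨M, hMb⟩ := hM
  -- the sup of ‖fderiv A‖
  set N : ℝ := ⨆ x : Rn n, ‖fderiv ℝ A x‖ with hN_def
  have hbdd : BddAbove (Set.range fun x : Rn n => ‖fderiv ℝ A x‖) := by
    refine ⟨M, ?_⟩
    rintro r ⟨x, rfl⟩
    exact le_trans (le_add_of_nonneg_left (abs_nonneg _)) (hMb x)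
  have hN : ∀ x, ‖fderiv ℝ A x‖ ≤ N := fun x => le_ciSup hbdd x
  have hN0 : 0 ≤ N := le_trans (norm_nonneg _) (hN 0)
  have hNc1 : ENNReal.ofReal N ≤ c1Norm A := by
    have hle : ENNReal.ofReal N ≤ ⨆ x : Rn n, (‖fderiv ℝ A x‖₊ : ℝ≥0∞) := by
      refine ENNReal.le_of_forall_pos_le_add fun δ hδ _ => ?_
      have hlt : N - δ < N := by
        have : (0:ℝ) < δ := hδ
        linarith
      obtain ⟨r, hrmem, hr⟩ := exists_lt_of_lt_csSup
        (Set.range_nonempty (fun x : Rn n => ‖fderiv ℝ A x‖)) hlt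
      obtain ⟨x, rfl⟩ := hrmem
      calc ENNReal.ofReal N ≤ ENNReal.ofReal (‖fderiv ℝ A x‖ + δ) :=
            ENNReal.ofReal_le_ofReal (by linarith)
        _ = ENNReal.ofReal ‖fderiv ℝ A x‖ + ENNReal.ofReal (δ:ℝ) :=
            ENNReal.ofReal_add (norm_nonneg _) δ.coe_nonneg
        _ ≤ (⨆ x : Rn n, (‖fderiv ℝ A x‖₊ : ℝ≥0∞)) + δ := by
            gcongr
            · rw [ofReal_norm_eq_enorm]
              exact le_iSup (fun x : Rn n => (‖fderiv ℝ A x‖₊ : ℝ≥0∞)) x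
            · simp [ENNReal.ofReal_coe_nnreal]
    exact le_trans hle (by rw [c1Norm]; exact le_add_self)
  -- the rescaled mollifier
  set φ : Rn n → ℝ := fun y => (ε ^ n)⁻¹ * θ (ε⁻¹ • y) with hφ_def
  have hφs : ContDiff ℝ (⊤ : ℕ∞) φ :=
    contDiff_const.mul (hθ_smooth.comp (contDiff_id.const_smul ε⁻¹))
  have hφc : HasCompactSupport φ := by
    apply HasCompactSupport.intro (isCompact_closedBall (0 : Rn n) ε)
    intro x hx
    have hx' : ε < ‖x‖ := by simpa [dist_zero_right] using hx
    have h1 : 1 < ‖ε⁻¹ • x‖ := by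
      rw [norm_smul, norm_inv, Real.norm_eq_abs, abs_of_pos hε, inv_mul_eq_div, one_lt_div hε]
      exact hx'
    simp [hφ_def, hθ_supp _ h1]
  -- continuity facts for φ
  have hφcont : Continuous φ := hφs.continuous
  have hφd : Continuous fun y : Rn n => fderiv ℝ φ y := hφs.continuous_fderiv (by simp)
  have hφdj : Continuous fun y : Rn n => fderiv ℝ φ y e :=
    (ContinuousLinearMap.apply ℝ ℝ e).continuous.comp hφd
  -- formula for the derivative of φ
  have hφderiv : ∀ y : Rn n, fderiv ℝ φ y e = (ε ^ n)⁻¹ * (ε⁻¹ * fderiv ℝ θ (ε⁻¹ • y) e) := by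
    intro y
    have hS : HasFDerivAt (fun w : Rn n => ε⁻¹ • w) (ε⁻¹ • ContinuousLinearMap.id ℝ (Rn n)) y :=
      (hasFDerivAt_id y).const_smul ε⁻¹
    have hθz : HasFDerivAt θ (fderiv ℝ θ (ε⁻¹ • y)) (ε⁻¹ • y) :=
      (hθ_smooth.differentiable (by simp) (ε⁻¹ • y)).hasFDerivAt
    have hcomp : HasFDerivAt (fun w : Rn n => θ (ε⁻¹ • w))
        ((fderiv ℝ θ (ε⁻¹ • y)).comp (ε⁻¹ • ContinuousLinearMap.id ℝ (Rn n))) y :=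
      hθz.comp y hS
    have hmul := hcomp.const_mul ((ε ^ n)⁻¹)
    have : fderiv ℝ φ y = (ε ^ n)⁻¹ •
        ((fderiv ℝ θ (ε⁻¹ • y)).comp (ε⁻¹ • ContinuousLinearMap.id ℝ (Rn n))) := by
      rw [hφ_def]
      exact hmul.fderiv
    rw [this]
    simp only [ContinuousLinearMap.smul_apply, ContinuousLinearMap.comp_apply,
      ContinuousLinearMap.coe_smul', Pi.smul_apply, ContinuousLinearMap.coe_id', id_eq,
      _root_.map_smul, smul_eq_mul]
  -- the ℝ≥0∞-valued kernel
  set V : Rn n → ℝ≥0∞ := fun z => (‖v z‖₊ : ℝ≥0∞) with hV_def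
  have hVmeas : Measurable V := hv.continuous.measurable.nnnorm.coe_nnreal_ennreal
  set k : Rn n → ℝ≥0∞ := fun y =>
    ((‖fderiv ℝ φ y e‖₊ : ℝ≥0∞) * (‖y‖₊ : ℝ≥0∞) + (‖φ y‖₊ : ℝ≥0∞)) * ENNReal.ofReal N
    with hk_def
  have hGemeas : Measurable fun y : Rn n =>
      (‖fderiv ℝ φ y e‖₊ : ℝ≥0∞) * (‖y‖₊ : ℝ≥0∞) + (‖φ y‖₊ : ℝ≥0∞) :=
    ((hφdj.measurable.nnnorm.coe_nnreal_ennreal).mul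
      (continuous_nnnorm.measurable.coe_nnreal_ennreal)).add
      (hφcont.measurable.nnnorm.coe_nnreal_ennreal)
  have hkmeas : Measurable k := hGemeas.mul_const _
  -- kernel integral bound
  have hGeReal : ∀ y : Rn n, ‖fderiv ℝ φ y e‖ * ‖y‖ + |φ y|
      ≤ (ε ^ n)⁻¹ * (‖fderiv ℝ θ (ε⁻¹ • y) e‖ + |θ (ε⁻¹ • y)|) := by
    intro y
    have hεn : (0:ℝ) < (ε ^ n)⁻¹ := by positivity
    have hφyabs : |φ y| = (ε ^ n)⁻¹ * |θ (ε⁻¹ • y)| := by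
      rw [hφ_def]
      simp only []
      rw [abs_mul, abs_of_pos hεn]
    have hφde : ‖fderiv ℝ φ y e‖ = (ε ^ n)⁻¹ * (ε⁻¹ * ‖fderiv ℝ θ (ε⁻¹ • y) e‖) := by
      rw [hφderiv y, Real.norm_eq_abs, abs_mul, abs_mul, abs_of_pos hεn,
        abs_of_pos (inv_pos.2 hε)]
      rfl
    rcases le_or_gt ‖y‖ ε with hy | hy
    · have h1 : ε⁻¹ * ‖y‖ ≤ 1 := by
        rw [inv_mul_eq_div, div_le_one hε]; exact hy
      have h2 : ‖fderiv ℝ φ y e‖ * ‖y‖ ≤ (ε ^ n)⁻¹ * ‖fderiv ℝ θ (ε⁻¹ • y) e‖ := by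
        rw [hφde]
        have := mul_le_of_le_one_left (norm_nonneg (fderiv ℝ θ (ε⁻¹ • y) e)) h1
        nlinarith [norm_nonneg (fderiv ℝ θ (ε⁻¹ • y) e), norm_nonneg y,
          inv_nonneg.2 (le_of_lt hε), hεn.le]
      rw [hφyabs]
      nlinarith [abs_nonneg (θ (ε⁻¹ • y))]
    · have h1 : 1 < ‖ε⁻¹ • y‖ := by
        rw [norm_smul, norm_inv, Real.norm_eq_abs, abs_of_pos hε, inv_mul_eq_div, one_lt_div hε]
        exact hy
      have h2 : fderiv ℝ θ (ε⁻¹ • y) = 0 := hθd0 _ h1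
      have h3 : θ (ε⁻¹ • y) = 0 := hθ_supp _ h1
      rw [hφyabs, hφde, h2, h3]
      simp
  have hkint : ∫⁻ y, k y ≤ ENNReal.ofReal N * C := by
    have hGe : ∀ y : Rn n, (‖fderiv ℝ φ y e‖₊ : ℝ≥0∞) * (‖y‖₊ : ℝ≥0∞) + (‖φ y‖₊ : ℝ≥0∞)
        ≤ ENNReal.ofReal ((ε ^ n)⁻¹) * H (ε⁻¹ • y) := by
      intro y
      have hL : (‖fderiv ℝ φ y e‖₊ : ℝ≥0∞) * (‖y‖₊ : ℝ≥0∞) + (‖φ y‖₊ : ℝ≥0∞)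
          = ENNReal.ofReal (‖fderiv ℝ φ y e‖ * ‖y‖ + |φ y|) := by
        rw [ENNReal.ofReal_add (by positivity) (abs_nonneg _),
          ENNReal.ofReal_mul (norm_nonneg _), ofReal_norm_eq_enorm,
          ofReal_norm_eq_enorm, ← Real.enorm_eq_ofReal_abs]
        rfl
      have hR : ENNReal.ofReal ((ε ^ n)⁻¹) * H (ε⁻¹ • y)
          = ENNReal.ofReal ((ε ^ n)⁻¹ * (‖fderiv ℝ θ (ε⁻¹ • y) e‖ + |θ (ε⁻¹ • y)|)) := by
        rw [hH_def]
        simp only []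
        rw [ENNReal.ofReal_mul (by positivity), ENNReal.ofReal_add (norm_nonneg _) (abs_nonneg _),
          ofReal_norm_eq_enorm, ← Real.enorm_eq_ofReal_abs]
        rfl
      rw [hL, hR]
      exact ENNReal.ofReal_le_ofReal (hGeReal y)
    have hmeasHs : Measurable fun y : Rn n => H (ε⁻¹ • y) :=
      hHmeas.comp (measurable_const_smul _)
    calc ∫⁻ y, k y
        = (∫⁻ y, (‖fderiv ℝ φ y e‖₊ : ℝ≥0∞) * (‖y‖₊ : ℝ≥0∞) + (‖φ y‖₊ : ℝ≥0∞))
            * ENNReal.ofReal N := lintegral_mul_const _ hGemeas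
      _ ≤ (∫⁻ y, ENNReal.ofReal ((ε ^ n)⁻¹) * H (ε⁻¹ • y)) * ENNReal.ofReal N :=
          mul_le_mul_left (lintegral_mono hGe) _
      _ = ENNReal.ofReal ((ε ^ n)⁻¹) * (ENNReal.ofReal (ε ^ n) * C) * ENNReal.ofReal N := by
          rw [lintegral_const_mul _ hmeasHs, lintegral_comp_inv_smul H hHmeas hε, hC_def]
      _ = ENNReal.ofReal N * C := by
          rw [← mul_assoc, ← ENNReal.ofReal_mul (by positivity),
            inv_mul_cancel₀ (ne_of_gt (pow_pos hε n)), ENNReal.ofReal_one, one_mul, mul_comm]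
  -- compact support / integrability helpers
  have hv1 : ContDiff ℝ 1 v := hv.of_le (by simp)
  have hAv : ContDiff ℝ 1 (fun w => A w * v w) := hA.mul hv1
  have hAvc : HasCompactSupport (fun w => A w * v w) := hvc.mul_left
  have hvcont : Continuous v := hv.continuous
  have hAcont : Continuous A := hA.continuous
  have hAdcont : Continuous fun z : Rn n => fderiv ℝ A z := hA.continuous_fderiv one_ne_zero
  have hAdjcont : Continuous fun z : Rn n => fderiv ℝ A z e :=
    (ContinuousLinearMap.apply ℝ ℝ e).continuous.comp hAdcont
  have hvx : ∀ x : Rn n, HasCompactSupport fun y => v (x - y) := fun x =>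
    hvc.comp_homeomorph (Homeomorph.subLeft x)
  have hvxcont : ∀ x : Rn n, Continuous fun y : Rn n => v (x - y) := fun x =>
    hvcont.comp (continuous_const.sub continuous_id)
  have hsubcont : ∀ x : Rn n, Continuous fun y : Rn n => x - y := fun x =>
    continuous_const.sub continuous_id
  -- product rule
  have hAd : ∀ z : Rn n, A z * fderiv ℝ v z e
      = fderiv ℝ (fun w => A w * v w) z e - v z * fderiv ℝ A z e := by
    intro z
    rw [fderiv_fun_mul ((hA.differentiable one_ne_zero).differentiableAt)
      ((hv1.differentiable one_ne_zero).differentiableAt)]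
    simp only [ContinuousLinearMap.add_apply, ContinuousLinearMap.smul_apply, smul_eq_mul]
    ring
  -- the commutator representation
  have hrepr : ∀ x : Rn n,
      A x * mollify θ ε (partialDeriv j v) x - mollify θ ε (fun y => A y * partialDeriv j v y) x
      = ∫ y, (fderiv ℝ φ y e * ((A x - A (x - y)) * v (x - y))
          + φ y * (fderiv ℝ A (x - y) e * v (x - y))) := by
    intro x
    have hmoll : ∀ f : Rn n → ℝ, mollify θ ε f x = ∫ y, φ y * f (x - y) := fun f => rfl
    have hpd : partialDeriv j v = fun z => fderiv ℝ v z e := rfl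
    have int_a : Integrable (fun y => A x * (fderiv ℝ φ y e * v (x - y))) volume := by
      apply Continuous.integrable_of_hasCompactSupport
      · exact continuous_const.mul (hφdj.mul (hvxcont x))
      · exact ((hvx x).mul_left).mul_left
    have int_b : Integrable (fun y => fderiv ℝ φ y e * ((fun w => A w * v w) (x - y))) volume := by
      apply Continuous.integrable_of_hasCompactSupport
      · exact hφdj.mul ((hAcont.mul hvcont).comp (hsubcont x))
      · exact (hAvc.comp_homeomorph (Homeomorph.subLeft x)).mul_left
    have int_c : Integrable (fun y => φ y * (fderiv ℝ A (x - y) e * v (x - y))) volume := by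
      apply Continuous.integrable_of_hasCompactSupport
      · exact hφcont.mul ((hAdjcont.comp (hsubcont x)).mul (hvxcont x))
      · exact (((hvx x).mul_left).mul_left)
    have hI1 : mollify θ ε (partialDeriv j v) x = ∫ y, fderiv ℝ φ y e * v (x - y) := by
      rw [hmoll, hpd]
      exact conv_swap_deriv φ v hφs hφc hv1 hvc e x
    have hI2 : mollify θ ε (fun y => A y * partialDeriv j v y) x
        = (∫ y, fderiv ℝ φ y e * ((fun w => A w * v w) (x - y)))
          - ∫ y, φ y * (fderiv ℝ A (x - y) e * v (x - y)) := by
      have hcongr : ∀ y : Rn n, φ y * (A (x - y) * fderiv ℝ v (x - y) e)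
          = φ y * fderiv ℝ (fun w => A w * v w) (x - y) e
            - φ y * (fderiv ℝ A (x - y) e * v (x - y)) := by
        intro y
        rw [hAd (x - y)]
        ring
      have int_b' : Integrable (fun y => φ y * fderiv ℝ (fun w => A w * v w) (x - y) e)
          volume := by
        apply Continuous.integrable_of_hasCompactSupport
        · refine hφcont.mul ?_
          exact ((ContinuousLinearMap.apply ℝ ℝ e).continuous.comp
            (hAv.continuous_fderiv one_ne_zero)).comp (hsubcont x)
        · refine HasCompactSupport.mul_left ?_
          have : HasCompactSupport fun z : Rn n => fderiv ℝ (fun w => A w * v w) z e :=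
            ((hAvc.fderiv ℝ).comp_left (g := fun T : Rn n →L[ℝ] ℝ => T e) rfl)
          exact this.comp_homeomorph (Homeomorph.subLeft x)
      calc mollify θ ε (fun y => A y * partialDeriv j v y) x
          = ∫ y, φ y * (A (x - y) * fderiv ℝ v (x - y) e) := by rw [hmoll, hpd]
        _ = ∫ y, (φ y * fderiv ℝ (fun w => A w * v w) (x - y) e
              - φ y * (fderiv ℝ A (x - y) e * v (x - y))) := by
            exact integral_congr_ae (Filter.Eventually.of_forall hcongr)
        _ = (∫ y, φ y * fderiv ℝ (fun w => A w * v w) (x - y) e)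
              - ∫ y, φ y * (fderiv ℝ A (x - y) e * v (x - y)) :=
            integral_sub int_b' int_c
        _ = (∫ y, fderiv ℝ φ y e * ((fun w => A w * v w) (x - y)))
              - ∫ y, φ y * (fderiv ℝ A (x - y) e * v (x - y)) := by
            rw [conv_swap_deriv φ (fun w => A w * v w) hφs hφc hAv hAvc e x]
    rw [hI1, hI2, ← integral_const_mul]
    have int_t1 : Integrable (fun y => fderiv ℝ φ y e * ((A x - A (x - y)) * v (x - y)))
        volume := by
      apply Continuous.integrable_of_hasCompactSupport
      · exact hφdj.mul (((continuous_const.sub (hAcont.comp (hsubcont x)))).mul (hvxcont x))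
      · exact ((hvx x).mul_left).mul_left
    rw [integral_add int_t1 int_c]
    have hsplit : ∫ y, fderiv ℝ φ y e * ((A x - A (x - y)) * v (x - y))
        = (∫ y, A x * (fderiv ℝ φ y e * v (x - y)))
          - ∫ y, fderiv ℝ φ y e * ((fun w => A w * v w) (x - y)) := by
      rw [← integral_sub int_a int_b]
      refine integral_congr_ae (Filter.Eventually.of_forall fun y => ?_)
      simp only []
      ring
    rw [hsplit]
    ring
  -- Lipschitz bound for A
  have hlip : ∀ x y : Rn n, |A x - A (x - y)| ≤ N * ‖y‖ := by
    intro x y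
    have h := Convex.norm_image_sub_le_of_norm_fderiv_le
      (f := A) (s := (Set.univ : Set (Rn n)))
      (fun z _ => (hA.differentiable one_ne_zero).differentiableAt)
      (fun z _ => hN z) convex_univ (Set.mem_univ (x - y)) (Set.mem_univ x)
    rw [show x - (x - y) = y by abel] at h
    simpa [Real.norm_eq_abs] using h
  -- pointwise domination
  have hptw : ∀ x : Rn n,
      (‖A x * mollify θ ε (partialDeriv j v) x
        - mollify θ ε (fun y => A y * partialDeriv j v y) x‖₊ : ℝ≥0∞)
      ≤ ∫⁻ y, k y * V (x - y) := by
    intro x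
    rw [hrepr x]
    refine le_trans (enorm_integral_le_lintegral_enorm _) (lintegral_mono fun y => ?_)
    have hReal : ‖fderiv ℝ φ y e * ((A x - A (x - y)) * v (x - y))
        + φ y * (fderiv ℝ A (x - y) e * v (x - y))‖
        ≤ (‖fderiv ℝ φ y e‖ * ‖y‖ + |φ y|) * N * ‖v (x - y)‖ := by
      have hdA : |fderiv ℝ A (x - y) e| ≤ N := by
        have h1 := (fderiv ℝ A (x - y)).le_opNorm e
        rw [he, mul_one] at h1
        exact le_trans h1 (hN _)
      calc ‖fderiv ℝ φ y e * ((A x - A (x - y)) * v (x - y))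
            + φ y * (fderiv ℝ A (x - y) e * v (x - y))‖
          ≤ |fderiv ℝ φ y e| * (|A x - A (x - y)| * |v (x - y)|)
            + |φ y| * (|fderiv ℝ A (x - y) e| * |v (x - y)|) := by
            refine le_trans (norm_add_le _ _) (le_of_eq ?_)
            simp only [Real.norm_eq_abs, abs_mul]
        _ ≤ |fderiv ℝ φ y e| * ((N * ‖y‖) * |v (x - y)|)
            + |φ y| * (N * |v (x - y)|) := by
            gcongr
            · exact hlip x y
        _ = (‖fderiv ℝ φ y e‖ * ‖y‖ + |φ y|) * N * ‖v (x - y)‖ := by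
            rw [Real.norm_eq_abs, Real.norm_eq_abs]
            ring
    have hkV : k y * V (x - y)
        = ENNReal.ofReal ((‖fderiv ℝ φ y e‖ * ‖y‖ + |φ y|) * N * ‖v (x - y)‖) := by
      rw [hk_def, hV_def]
      simp only []
      rw [ENNReal.ofReal_mul (by positivity), ENNReal.ofReal_mul (by positivity),
        ENNReal.ofReal_add (by positivity) (abs_nonneg _),
        ENNReal.ofReal_mul (norm_nonneg _)]
      rw [ofReal_norm_eq_enorm, ofReal_norm_eq_enorm, ofReal_norm_eq_enorm,
        ← Real.enorm_eq_ofReal_abs]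
      rfl
    rw [hkV, ← ofReal_norm_eq_enorm]
    exact ENNReal.ofReal_le_ofReal hReal
  -- final assembly
  set pr := p.toReal with hpr_def
  have hp0 : p ≠ 0 := ne_of_gt (lt_of_lt_of_le zero_lt_one hp1)
  have hpr1 : 1 ≤ pr := by
    have := ENNReal.toReal_mono hp hp1
    simpa using this
  have hpr0 : 0 ≤ pr := le_trans zero_le_one hpr1
  rw [eLpNorm_eq_lintegral_rpow_enorm_toReal hp0 hp, eLpNorm_eq_lintegral_rpow_enorm_toReal hp0 hp]
  calc (∫⁻ x, (‖A x * mollify θ ε (partialDeriv j v) x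
        - mollify θ ε (fun y => A y * partialDeriv j v y) x‖₊ : ℝ≥0∞) ^ pr) ^ (1/pr)
      ≤ (∫⁻ x, (∫⁻ y, k y * V (x - y)) ^ pr) ^ (1/pr) := by
        refine ENNReal.rpow_le_rpow (lintegral_mono fun x => ?_) (by positivity)
        exact ENNReal.rpow_le_rpow (hptw x) hpr0
    _ ≤ (∫⁻ y, k y) * (∫⁻ x, V x ^ pr) ^ (1/pr) := young_conv k V hkmeas hVmeas pr hpr1
    _ ≤ (ENNReal.ofReal N * C) * (∫⁻ x, V x ^ pr) ^ (1/pr) := by gcongr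
    _ ≤ C * c1Norm A * (∫⁻ x, V x ^ pr) ^ (1/pr) := by
        have : ENNReal.ofReal N * C ≤ C * c1Norm A := by
          rw [mul_comm]
          exact mul_le_mul_right hNc1 C
        gcongr
    _ = C * c1Norm A * (∫⁻ x, (‖v x‖₊ : ℝ≥0∞) ^ pr) ^ (1/pr) := rfl
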